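/- There exist constants C > 0 and T₀ ≥ 1 such that for every real τ ≥ T₀ there are pairwise distinct complex numbers λ₁, λ₂, λ₃ with (X−λ₁)(X−λ₂)(X−λ₃) = X³ + X + i·τ (as polynomials over ℂ), Re λ₁ < Re λ₂ < Re λ₃, and |λ_j − (μ_j·τ^{1/3} − τ^{−1/3}/(3·μ_j))| ≤ C·τ^{−2/3} for each j ∈ {1,2,3}. -/

import Mathlib

/-!
With `w = μ s`, the number `λ = w - 1 / (3 w)` satisfies `λ ^ 3 + λ = w ^ 3 - 1 / (27 w ^ 3)`.
Since `μ_j ^ 3 = -i`, choosing the real `s ≥ 1` with `s ^ 3 + 1 / (27 s ^ 3) = τ` makes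
`λ_j = μ_j s - 1 / (3 μ_j s)` a root of `X ^ 3 + X + i τ` for each `j`. As `|μ_j| = 1`,
`Re λ_j = Re μ_j · (s - 1 / (3 s))`, and `Re μ_1 < Re μ_2 < Re μ_3` orders the roots, so they are
distinct and are all the roots. Finally `t = τ ^ (1/3)` satisfies `t ^ 3 - s ^ 3 ≤ 1 / 27`, hence
`t - s ≤ 1 / (27 t ^ 2)`, and the map `s ↦ μ s - 1 / (3 μ s)` is 2-Lipschitz on `[1, ∞)`.
-/

open Polynomial

/-- `μ_j = exp(−iπ/6 − 2ijπ/3)`. -/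
noncomputable def mu (j : ℕ) : ℂ :=
  Complex.exp (-(Complex.I * (Real.pi : ℂ)) / 6 - 2 * Complex.I * (j : ℂ) * (Real.pi : ℂ) / 3)

open Complex

lemma prod_X_sub_C_eq_cubic_of_roots {K : Type*} [Field K] {p q a b c : K}
    (hab : a ≠ b) (hac : a ≠ c) (hbc : b ≠ c) (ha : a ^ 3 + p * a + q = 0)
    (hb : b ^ 3 + p * b + q = 0) (hc : c ^ 3 + p * c + q = 0) :
    (X - C a) * (X - C b) * (X - C c) = X ^ 3 + C p * X + C q := by
  have hab' : a ^ 2 + a * b + b ^ 2 + p = 0 :=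
    mul_left_cancel₀ (sub_ne_zero.2 hab) (by linear_combination ha - hb)
  have hac' : a ^ 2 + a * c + c ^ 2 + p = 0 :=
    mul_left_cancel₀ (sub_ne_zero.2 hac) (by linear_combination ha - hc)
  have e₁ : a + b + c = 0 :=
    mul_left_cancel₀ (sub_ne_zero.2 hbc) (by linear_combination hab' - hac')
  have e₂ : a * b + a * c + b * c = p := by linear_combination (a + b) * e₁ - hab'
  have e₃ : a * b * c = -q := by linear_combination a * b * e₁ + ha - a * hab'
  calc (X - C a) * (X - C b) * (X - C c)
      = X ^ 3 - C (a + b + c) * X ^ 2 + C (a * b + a * c + b * c) * X - C (a * b * c) := by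
        simp only [map_add, map_mul]; ring
    _ = X ^ 3 + C p * X + C q := by rw [e₁, e₂, e₃]; simp

lemma sub_inv_three_mul_cube_add_self {K : Type*} [Field K] (h3 : (3 : K) ≠ 0) (w : K) :
    (w - (3 * w)⁻¹) ^ 3 + (w - (3 * w)⁻¹) = w ^ 3 - (27 * w ^ 3)⁻¹ := by
  have h27 : (27 : K) ≠ 0 := by
    simpa [show (27 : K) = 3 ^ 3 by norm_num] using pow_ne_zero 3 h3
  rcases eq_or_ne w 0 with rfl | hw
  · simp
  · field_simp
    ring

lemma sub_le_cube_sub_div_sq {s t : ℝ} (hs : 0 ≤ s) (hst : s ≤ t) (ht : 0 < t) :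
    t - s ≤ (t ^ 3 - s ^ 3) / t ^ 2 := by
  rw [le_div_iff₀ (by positivity)]
  nlinarith [mul_nonneg (mul_nonneg hs (sub_nonneg.2 hst)) (add_nonneg hs ht.le)]

lemma sub_le_inv_of_cube_add_inv_eq {s t : ℝ} (hs : 1 ≤ s) (hst : s ≤ t)
    (h : s ^ 3 + (27 * s ^ 3)⁻¹ = t ^ 3) : t - s ≤ (27 * t ^ 2)⁻¹ := by
  have hgap := sub_le_cube_sub_div_sq (by linarith) hst (by linarith)
  rw [← h, add_sub_cancel_left] at hgap
  calc t - s ≤ (27 * s ^ 3)⁻¹ / t ^ 2 := hgap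
    _ ≤ 27⁻¹ / t ^ 2 := by
        gcongr
        exact le_mul_of_one_le_right (by norm_num) (one_le_pow₀ hs)
    _ = (27 * t ^ 2)⁻¹ := by rw [mul_inv, div_eq_mul_inv]

lemma rpow_one_third_pow_three {x : ℝ} (hx : 0 ≤ x) : (x ^ ((1 : ℝ) / 3)) ^ 3 = x := by
  simpa using Real.rpow_inv_natCast_pow (n := 3) hx three_ne_zero

lemma exists_one_le_cube_add_inv_eq {τ : ℝ} (hτ : 2 ≤ τ) :
    ∃ s : ℝ, 1 ≤ s ∧ s ^ 3 + (27 * s ^ 3)⁻¹ = τ := by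
  -- `σ = s ^ 3` is the larger root of `27 σ ^ 2 - 27 τ σ + 1`.
  set σ := (τ + √(τ ^ 2 - 4 / 27)) / 2
  have hd : √(τ ^ 2 - 4 / 27) ^ 2 = τ ^ 2 - 4 / 27 := Real.sq_sqrt (by nlinarith)
  have hσ : 1 ≤ σ := by
    have := Real.sqrt_nonneg (τ ^ 2 - 4 / 27)
    simp only [σ]
    linarith
  refine ⟨σ ^ ((1 : ℝ) / 3), Real.one_le_rpow hσ (by norm_num), ?_⟩
  rw [rpow_one_third_pow_three (by linarith)]
  field_simp
  simp only [σ]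
  linear_combination (27 / 4 : ℝ) * hd

lemma mu_eq_exp (j : ℕ) : mu j = exp ((-(Real.pi / 6) - 2 * j * Real.pi / 3 : ℝ) * I) := by
  unfold mu; congr 1; push_cast; ring

lemma norm_mu (j : ℕ) : ‖mu j‖ = 1 := by
  rw [mu_eq_exp]; exact norm_exp_ofReal_mul_I _

lemma mu_pow_three (j : ℕ) : mu j ^ 3 = -I := by
  rw [mu_eq_exp, ← exp_nat_mul, ← ofReal_natCast, ← mul_assoc, ← ofReal_mul, exp_mul_I,
    ← ofReal_cos, ← ofReal_sin,
    show ((3 : ℕ) : ℝ) * (-(Real.pi / 6) - 2 * j * Real.pi / 3) = -(Real.pi / 2) - j * (2 * Real.pi)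
      by push_cast; ring,
    Real.cos_sub_nat_mul_two_pi, Real.sin_sub_nat_mul_two_pi, Real.cos_neg, Real.sin_neg,
    Real.cos_pi_div_two, Real.sin_pi_div_two]
  simp

lemma re_mu (j : ℕ) : (mu j).re = Real.cos (-(Real.pi / 6) - 2 * j * Real.pi / 3) := by
  rw [mu_eq_exp, exp_ofReal_mul_I_re]

lemma re_mu_one : (mu 1).re = -(√3 / 2) := by
  rw [re_mu, show -(Real.pi / 6) - 2 * ((1 : ℕ) : ℝ) * Real.pi / 3 = -(Real.pi - Real.pi / 6) by
    push_cast; ring, Real.cos_neg, Real.cos_pi_sub, Real.cos_pi_div_six]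

lemma re_mu_two : (mu 2).re = 0 := by
  rw [re_mu, show -(Real.pi / 6) - 2 * ((2 : ℕ) : ℝ) * Real.pi / 3 = Real.pi / 2 - 2 * Real.pi by
    push_cast; ring, Real.cos_sub_two_pi, Real.cos_pi_div_two]

lemma re_mu_three : (mu 3).re = √3 / 2 := by
  rw [re_mu, show -(Real.pi / 6) - 2 * ((3 : ℕ) : ℝ) * Real.pi / 3 = -(Real.pi / 6) - 2 * Real.pi by
    push_cast; ring, Real.cos_sub_two_pi, Real.cos_neg, Real.cos_pi_div_six]

noncomputable def cardanoRoot (μ : ℂ) (s : ℝ) : ℂ := μ * s - ((s⁻¹ : ℝ) : ℂ) / (3 * μ)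

lemma cardanoRoot_cube_add_self {μ : ℂ} (hμ : μ ^ 3 = -I) {s τ : ℝ}
    (hs : s ^ 3 + (27 * s ^ 3)⁻¹ = τ) :
    cardanoRoot μ s ^ 3 + cardanoRoot μ s + I * τ = 0 := by
  have h := sub_inv_three_mul_cube_add_self (three_ne_zero (α := ℂ)) (μ * s)
  rw [show (3 * (μ * s))⁻¹ = ((s⁻¹ : ℝ) : ℂ) / (3 * μ) by push_cast; ring] at h
  rw [cardanoRoot, h, mul_pow, hμ, ← hs]
  push_cast
  rw [show 27 * (-I * s ^ 3) = -I * (27 * s ^ 3) by ring, mul_inv, inv_neg, inv_I]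
  ring

lemma re_cardanoRoot {μ : ℂ} (hμ : ‖μ‖ = 1) (s : ℝ) :
    (cardanoRoot μ s).re = μ.re * (s - s⁻¹ / 3) := by
  have h9 : normSq (3 * μ) = 9 := by
    rw [normSq_mul, normSq_eq_norm_sq μ, hμ]; norm_num [normSq_apply]
  simp [cardanoRoot, div_re, h9]
  ring

lemma cardanoRoot_re_lt {μ ν : ℂ} (hμ : ‖μ‖ = 1) (hν : ‖ν‖ = 1) (hre : μ.re < ν.re)
    {s : ℝ} (hs : 1 ≤ s) : (cardanoRoot μ s).re < (cardanoRoot ν s).re := by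
  have hpos : 0 < s - s⁻¹ / 3 := by
    have : s⁻¹ ≤ 1 := inv_le_one_of_one_le₀ hs
    linarith
  rw [re_cardanoRoot hμ, re_cardanoRoot hν]
  exact mul_lt_mul_of_pos_right hre hpos

lemma norm_cardanoRoot_sub_le {μ : ℂ} (hμ : ‖μ‖ = 1) {s t : ℝ} (hs : 1 ≤ s) (hst : s ≤ t) :
    ‖cardanoRoot μ s - cardanoRoot μ t‖ ≤ 2 * (t - s) := by
  have hdiff : cardanoRoot μ s - cardanoRoot μ t
      = μ * ((s - t : ℝ) : ℂ) + (3 * μ)⁻¹ * ((t⁻¹ - s⁻¹ : ℝ) : ℂ) := by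
    unfold cardanoRoot; push_cast; ring
  have hs0 : 0 < s := by linarith
  have hinv : s⁻¹ - t⁻¹ ≤ t - s := by
    rw [inv_sub_inv hs0.ne' (by linarith)]
    exact div_le_self (by linarith) (by nlinarith)
  have hinv0 : 0 ≤ s⁻¹ - t⁻¹ := sub_nonneg.2 (inv_anti₀ hs0 hst)
  calc ‖cardanoRoot μ s - cardanoRoot μ t‖
      ≤ ‖μ * ((s - t : ℝ) : ℂ)‖ + ‖(3 * μ)⁻¹ * ((t⁻¹ - s⁻¹ : ℝ) : ℂ)‖ :=
        hdiff ▸ norm_add_le _ _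
    _ = (t - s) + (s⁻¹ - t⁻¹) / 3 := by
        simp only [norm_mul, norm_inv, hμ, norm_real, Real.norm_eq_abs, abs_sub_comm s t,
          abs_sub_comm t⁻¹ s⁻¹, abs_of_nonneg (sub_nonneg.2 hst), abs_of_nonneg hinv0]
        norm_num; ring
    _ ≤ 2 * (t - s) := by linarith

lemma norm_cardanoRoot_sub_le_inv_sq {μ : ℂ} (hμ : ‖μ‖ = 1) {s t : ℝ} (hs : 1 ≤ s) (hst : s ≤ t)
    (h : s ^ 3 + (27 * s ^ 3)⁻¹ = t ^ 3) : ‖cardanoRoot μ s - cardanoRoot μ t‖ ≤ (t ^ 2)⁻¹ :=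
  calc ‖cardanoRoot μ s - cardanoRoot μ t‖
      ≤ 2 * (t - s) := norm_cardanoRoot_sub_le hμ hs hst
    _ ≤ 2 * (27 * t ^ 2)⁻¹ := by gcongr; exact sub_le_inv_of_cube_add_inv_eq hs hst h
    _ ≤ (t ^ 2)⁻¹ := by
        rw [mul_inv, ← mul_assoc]; exact mul_le_of_le_one_left (by positivity) (by norm_num)

theorem stmt_12 :
    ∃ C : ℝ, 0 < C ∧ ∃ T₀ : ℝ, 1 ≤ T₀ ∧ ∀ τ : ℝ, T₀ ≤ τ →
      ∃ l₁ l₂ l₃ : ℂ,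
        (X - Polynomial.C l₁) * (X - Polynomial.C l₂) * (X - Polynomial.C l₃) =
          X ^ 3 + X + Polynomial.C (Complex.I * (τ : ℂ)) ∧
        l₁ ≠ l₂ ∧ l₁ ≠ l₃ ∧ l₂ ≠ l₃ ∧
        l₁.re < l₂.re ∧ l₂.re < l₃.re ∧
        ‖(l₁ - (mu 1 * ((τ ^ ((1 : ℝ) / 3) : ℝ) : ℂ)
            - ((τ ^ (-(1 : ℝ) / 3) : ℝ) : ℂ) / (3 * mu 1)))‖ ≤ C * τ ^ (-(2 : ℝ) / 3) ∧
        ‖(l₂ - (mu 2 * ((τ ^ ((1 : ℝ) / 3) : ℝ) : ℂ)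
            - ((τ ^ (-(1 : ℝ) / 3) : ℝ) : ℂ) / (3 * mu 2)))‖ ≤ C * τ ^ (-(2 : ℝ) / 3) ∧
        ‖(l₃ - (mu 3 * ((τ ^ ((1 : ℝ) / 3) : ℝ) : ℂ)
            - ((τ ^ (-(1 : ℝ) / 3) : ℝ) : ℂ) / (3 * mu 3)))‖ ≤ C * τ ^ (-(2 : ℝ) / 3) := by
  refine ⟨1, one_pos, 2, one_le_two, fun τ hτ => ?_⟩
  obtain ⟨s, hs, hsτ⟩ := exists_one_le_cube_add_inv_eq hτ
  set t := τ ^ ((1 : ℝ) / 3)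
  have hτ0 : 0 < τ := by linarith
  have ht3 : t ^ 3 = τ := rpow_one_third_pow_three hτ0.le
  have hst : s ≤ t := le_of_pow_le_pow_left₀ three_ne_zero (by positivity)
    (by rw [ht3, ← hsτ]; exact le_add_of_nonneg_right (by positivity))
  have hτinv : τ ^ (-(1 : ℝ) / 3) = t⁻¹ := by rw [neg_div, Real.rpow_neg hτ0.le]
  have hdecay : τ ^ (-(2 : ℝ) / 3) = (t ^ 2)⁻¹ := by
    rw [neg_div, Real.rpow_neg hτ0.le, show (2 : ℝ) / 3 = 1 / 3 * (2 : ℕ) by norm_num,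
      Real.rpow_mul hτ0.le, Real.rpow_natCast]
  have herr (j : ℕ) : ‖cardanoRoot (mu j) s - cardanoRoot (mu j) t‖ ≤ 1 * τ ^ (-(2 : ℝ) / 3) := by
    rw [hdecay, one_mul]
    exact norm_cardanoRoot_sub_le_inv_sq (norm_mu j) hs hst (hsτ.trans ht3.symm)
  have hroot (j : ℕ) : cardanoRoot (mu j) s ^ 3 + 1 * cardanoRoot (mu j) s + I * τ = 0 := by
    rw [one_mul]; exact cardanoRoot_cube_add_self (mu_pow_three j) hsτ
  have h3 : 0 < √3 / 2 := by positivity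
  have h12 := cardanoRoot_re_lt (norm_mu 1) (norm_mu 2) (by rw [re_mu_one, re_mu_two]; linarith) hs
  have h23 := cardanoRoot_re_lt (norm_mu 2) (norm_mu 3) (by rw [re_mu_two, re_mu_three]; linarith) hs
  have h13 := h12.trans h23
  refine ⟨cardanoRoot (mu 1) s, cardanoRoot (mu 2) s, cardanoRoot (mu 3) s, ?_,
    fun h => h12.ne (congrArg re h), fun h => h13.ne (congrArg re h),
    fun h => h23.ne (congrArg re h), h12, h23, ?_, ?_, ?_⟩
  · simpa using prod_X_sub_C_eq_cubic_of_roots (fun h => h12.ne (congrArg re h))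
      (fun h => h13.ne (congrArg re h)) (fun h => h23.ne (congrArg re h))
      (hroot 1) (hroot 2) (hroot 3)
  all_goals rw [hτinv]; exact herr _
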